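/- Let (G, μ) be a weighted graph, let p ∈ [1, ∞), and let k be an integer with 1 ≤ k ≤ #V − 1. Then ν_{k,p}(G, μ) ≤ ν̂_{k,p}(G, μ) ≤ 2^p · ν_{k,p}(G, μ). -/

import Mathlib

open scoped BigOperators Classical

noncomputable section

/-- A weighted graph: a simple connected finite graph together with a symmetric
nonnegative weight which is positive exactly on edges. -/
structure WeightedGraph (V : Type*) [Fintype V] where
  G : SimpleGraph V
  connected : G.Connected
  w : V → V → ℝ
  symm : ∀ x y, w x y = w y x
  nonneg : ∀ x y, 0 ≤ w x y
  pos_iff_adj : ∀ x y, 0 < w x y ↔ G.Adj x y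

namespace WeightedGraph

variable {V : Type*} [Fintype V]

/-- The weight `μ(x)` of a vertex. -/
def vwt (W : WeightedGraph V) (x : V) : ℝ := ∑ y, W.w x y

/-- The weight `μ(A)` of a set of vertices. -/
def swt (W : WeightedGraph V) (A : Set V) : ℝ :=
  ∑ x ∈ Finset.univ.filter (· ∈ A), W.vwt x

/-- The weighted mean of a function. -/
def mean (W : WeightedGraph V) (φ : V → ℝ) : ℝ :=
  (∑ x, φ x * W.vwt x) / W.swt Set.univ

/-- The `p`-energy of a function. -/
def energy (W : WeightedGraph V) (p : ℝ) (φ : V → ℝ) : ℝ :=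
  ∑ x, ∑ y, |φ y - φ x| ^ p * W.w x y

/-- The `k`-th discrete `p`-Poincaré constant. -/
def nu (W : WeightedGraph V) (k : ℕ) (p : ℝ) : ℝ :=
  sInf {s | ∃ L : Submodule ℝ (V → ℝ), Module.finrank ℝ L = k ∧
    (∀ φ ∈ L, (∃ c : ℝ, ∀ x, φ x = c) → φ = 0) ∧
    s = sSup {r | ∃ φ ∈ L, φ ≠ 0 ∧
      r = W.energy p φ / (2 * ∑ x, |φ x - W.mean φ| ^ p * W.vwt x)}}

/-- The `k`-th discrete modified `p`-Poincaré constant. -/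
def nuHat (W : WeightedGraph V) (k : ℕ) (p : ℝ) : ℝ :=
  sInf {s | ∃ L : Submodule ℝ (V → ℝ), Module.finrank ℝ L = k + 1 ∧
    s = sSup {r | ∃ φ ∈ L, φ ≠ 0 ∧
      r = W.energy p φ / (2 * ∑ x, |φ x| ^ p * W.vwt x)}}

/-- The vertex boundary of a set of vertices. -/
def vbdry (W : WeightedGraph V) (Ω : Set V) : Set V :=
  {x ∈ Ω | ∃ y ∉ Ω, 0 < W.w x y}

/-- The `k`-th discrete Dirichlet `p`-Poincaré constant of `Ω`; functions on `Ω`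
vanishing on the vertex boundary are modelled as functions on `V` vanishing
outside `Ω \ ∂ᵥΩ`. -/
def nuD (W : WeightedGraph V) (Ω : Set V) (k : ℕ) (p : ℝ) : ℝ :=
  sInf {s | ∃ L : Submodule ℝ (V → ℝ), Module.finrank ℝ L = k ∧
    (∀ φ ∈ L, ∀ x, x ∉ Ω \ W.vbdry Ω → φ x = 0) ∧
    s = sSup {r | ∃ φ ∈ L, φ ≠ 0 ∧
      r = (∑ x ∈ Finset.univ.filter (· ∈ Ω), ∑ y ∈ Finset.univ.filter (· ∈ Ω),
            |φ y - φ x| ^ p * W.w x y) /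
          (2 * ∑ x ∈ Finset.univ.filter (· ∈ Ω), |φ x| ^ p * W.vwt x)}}

/-- The closed `r`-neighborhood of a set of vertices w.r.t. the graph distance. -/
def ball (W : WeightedGraph V) (A : Set V) (r : ℝ) : Set V :=
  {x | ∃ a ∈ A, (W.G.dist x a : ℝ) ≤ r}

/-- The graph distance between two sets of vertices. -/
def setDist (W : WeightedGraph V) (A B : Set V) : ℕ :=
  sInf {n : ℕ | ∃ a ∈ A, ∃ b ∈ B, W.G.dist a b = n}

end WeightedGraph

/-!
Both constants are min-max values of Rayleigh quotients with the same numerator, the `p`-energy.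
For `ν ≤ ν̂`: every `(k+1)`-dimensional space `L` contains a `k`-dimensional space of functions
of mean zero; it contains no nonzero constant, and on it the two quotients agree.
For `ν̂ ≤ 2ᵖ ν`: a `k`-dimensional space `K` without constants is enlarged to `K ⊕ ℝ·1`.
Adding a constant changes neither the energy nor `φ - φ̄`, while
`∑ |φ - φ̄|ᵖ μ ≤ 2ᵖ ∑ |φ|ᵖ μ` follows from `|a - b|ᵖ ≤ 2ᵖ⁻¹ (|a|ᵖ + |b|ᵖ)` and Jensen's
inequality `|φ̄|ᵖ μ(V) ≤ ∑ |φ|ᵖ μ`.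
-/

open Module Finset

theorem abs_sub_rpow_le_two_rpow_mul {p : ℝ} (hp : 1 ≤ p) (a b : ℝ) :
    |a - b| ^ p ≤ 2 ^ (p - 1) * (|a| ^ p + |b| ^ p) :=
  calc |a - b| ^ p ≤ (|a| + |b|) ^ p :=
        Real.rpow_le_rpow (abs_nonneg _) (abs_sub _ _) (zero_le_one.trans hp)
    _ ≤ 2 ^ (p - 1) * (|a| ^ p + |b| ^ p) := by
        exact_mod_cast
          NNReal.rpow_add_le_mul_rpow_add_rpow ⟨|a|, abs_nonneg a⟩ ⟨|b|, abs_nonneg b⟩ hp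

theorem two_rpow_sub_one_mul_two (p : ℝ) : (2 : ℝ) ^ (p - 1) * 2 = 2 ^ p := by
  rw [← Real.rpow_add_one two_ne_zero, sub_add_cancel]

theorem div_two_mul_le_two_rpow_sub_one {p E D : ℝ} (hD : 0 ≤ D) (h : E ≤ 2 ^ p * D) :
    E / (2 * D) ≤ 2 ^ (p - 1) :=
  div_le_of_le_mul₀ (by positivity) (by positivity) <| by
    rwa [← mul_assoc, two_rpow_sub_one_mul_two]

namespace Submodule

section Field

variable {K M : Type*} [Field K] [AddCommGroup M] [Module K M]

theorem exists_le_finrank_eq (N : Submodule K M) {k : ℕ} (hk : k ≤ finrank K N) :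
    ∃ P ≤ N, finrank K P = k := by
  obtain ⟨f, hf⟩ := exists_linearIndependent_of_le_finrank hk
  exact ⟨(span K (Set.range f)).map N.subtype, map_subtype_le _ _, by
    rw [finrank_map_subtype_eq, finrank_span_eq_card hf, Fintype.card_fin]⟩

theorem exists_le_ker_finrank_eq (f : M →ₗ[K] K) (L : Submodule K M) [FiniteDimensional K L]
    {k : ℕ} (hk : k + 1 ≤ finrank K L) :
    ∃ N ≤ L, N ≤ LinearMap.ker f ∧ finrank K N = k := by
  set g := f ∘ₗ L.subtype
  have hrange : finrank K (LinearMap.range g) ≤ 1 := (finrank_le _).trans_eq (finrank_self K)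
  have hker : k ≤ finrank K ((LinearMap.ker g).map L.subtype) := by
    have := g.finrank_range_add_finrank_ker
    rw [finrank_map_subtype_eq]
    omega
  obtain ⟨N, hN, hNk⟩ := exists_le_finrank_eq _ hker
  refine ⟨N, hN.trans (map_subtype_le _ _), fun x hx => ?_, hNk⟩
  obtain ⟨y, hy, rfl⟩ := hN hx
  exact hy

end Field

section supNonzero

variable {M : Type*} [AddCommGroup M] [Module ℝ M]

def supNonzero (L : Submodule ℝ M) (f : M → ℝ) : ℝ :=
  sSup {r | ∃ φ ∈ L, φ ≠ 0 ∧ r = f φ}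

variable {L : Submodule ℝ M} {f : M → ℝ}

theorem supNonzero_nonneg (hf : ∀ φ, 0 ≤ f φ) : 0 ≤ L.supNonzero f :=
  Real.sSup_nonneg <| by rintro _ ⟨φ, -, -, rfl⟩; exact hf φ

theorem le_supNonzero {B : ℝ} (hB : ∀ φ, f φ ≤ B) {φ : M} (hφ : φ ∈ L) (h0 : φ ≠ 0) :
    f φ ≤ L.supNonzero f :=
  le_csSup ⟨B, by rintro _ ⟨ψ, -, -, rfl⟩; exact hB ψ⟩ ⟨φ, hφ, h0, rfl⟩

theorem supNonzero_le (hL : L ≠ ⊥) {c : ℝ} (h : ∀ φ ∈ L, φ ≠ 0 → f φ ≤ c) :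
    L.supNonzero f ≤ c := by
  obtain ⟨φ, hφ, h0⟩ := L.ne_bot_iff.1 hL
  exact csSup_le ⟨_, φ, hφ, h0, rfl⟩ <| by rintro _ ⟨ψ, hψ, hψ0, rfl⟩; exact h ψ hψ hψ0

end supNonzero

end Submodule

namespace WeightedGraph

variable {V : Type*} [Fintype V] (W : WeightedGraph V) {p : ℝ}

theorem vwt_nonneg (x : V) : 0 ≤ W.vwt x := sum_nonneg fun y _ => W.nonneg x y

theorem swt_univ : W.swt Set.univ = ∑ x, W.vwt x := by simp [swt]

theorem swt_univ_pos [Nontrivial V] : 0 < W.swt Set.univ := by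
  obtain ⟨x⟩ := ‹Nontrivial V›.to_nonempty
  obtain ⟨y, hxy⟩ := W.connected.preconnected.exists_adj_of_nontrivial x
  rw [swt_univ]
  exact sum_pos' (fun x _ => W.vwt_nonneg x)
    ⟨x, mem_univ x, sum_pos' (fun y _ => W.nonneg x y) ⟨y, mem_univ y, (W.pos_iff_adj x y).2 hxy⟩⟩

theorem mean_add (φ ψ : V → ℝ) : W.mean (φ + ψ) = W.mean φ + W.mean ψ := by
  simp only [mean, Pi.add_apply, add_mul, sum_add_distrib, add_div]

theorem mean_smul (c : ℝ) (φ : V → ℝ) : W.mean (c • φ) = c * W.mean φ := by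
  simp only [mean, Pi.smul_apply, smul_eq_mul, mul_assoc, ← mul_sum, mul_div_assoc]

def meanLinearMap : (V → ℝ) →ₗ[ℝ] ℝ where
  toFun := W.mean
  map_add' := W.mean_add
  map_smul' := W.mean_smul

theorem mean_const (hμ : W.swt Set.univ ≠ 0) (c : ℝ) : W.mean (fun _ => c) = c := by
  rw [mean, ← mul_sum, swt_univ, mul_div_assoc, div_self (swt_univ W ▸ hμ), mul_one]

theorem mean_add_const (hμ : W.swt Set.univ ≠ 0) (φ : V → ℝ) (c : ℝ) :
    W.mean (fun x => φ x + c) = W.mean φ + c :=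
  (W.mean_add φ fun _ => c).trans (by rw [W.mean_const hμ])

theorem energy_nonneg (p : ℝ) (φ : V → ℝ) : 0 ≤ W.energy p φ :=
  sum_nonneg fun x _ => sum_nonneg fun y _ =>
    mul_nonneg (Real.rpow_nonneg (abs_nonneg _) p) (W.nonneg x y)

theorem energy_add_const (p : ℝ) (φ : V → ℝ) (c : ℝ) :
    W.energy p (fun x => φ x + c) = W.energy p φ := by
  simp only [energy, add_sub_add_right_eq_sub]

theorem energy_zero (hp : p ≠ 0) : W.energy p 0 = 0 := by
  simp [energy, Real.zero_rpow hp]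

def powSum (p : ℝ) (φ : V → ℝ) : ℝ := ∑ x, |φ x| ^ p * W.vwt x

theorem powSum_nonneg (p : ℝ) (φ : V → ℝ) : 0 ≤ W.powSum p φ :=
  sum_nonneg fun x _ => mul_nonneg (Real.rpow_nonneg (abs_nonneg _) p) (W.vwt_nonneg x)

theorem energy_le_two_rpow_mul_powSum (hp : 1 ≤ p) (φ : V → ℝ) :
    W.energy p φ ≤ 2 ^ p * W.powSum p φ := by
  have hswap : ∑ x, ∑ y, |φ y| ^ p * W.w x y = W.powSum p φ := by
    rw [sum_comm]
    refine sum_congr rfl fun y _ => ?_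
    simp_rw [← mul_sum, W.symm _ y]
    rfl
  have hdiag : ∑ x, ∑ y, |φ x| ^ p * W.w x y = W.powSum p φ := by
    simp_rw [← mul_sum]
    rfl
  calc W.energy p φ ≤ ∑ x, ∑ y, 2 ^ (p - 1) * (|φ y| ^ p + |φ x| ^ p) * W.w x y :=
        sum_le_sum fun x _ => sum_le_sum fun y _ =>
          mul_le_mul_of_nonneg_right (abs_sub_rpow_le_two_rpow_mul hp _ _) (W.nonneg x y)
    _ = 2 ^ (p - 1) * ((∑ x, ∑ y, |φ y| ^ p * W.w x y) + ∑ x, ∑ y, |φ x| ^ p * W.w x y) := by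
        simp only [mul_sum, ← sum_add_distrib]
        exact sum_congr rfl fun x _ => sum_congr rfl fun y _ => by ring
    _ = 2 ^ p * W.powSum p φ := by
        rw [hswap, hdiag, ← two_rpow_sub_one_mul_two p]
        ring

theorem abs_mean_rpow_mul_swt_le (hμ : 0 < W.swt Set.univ) (hp : 1 ≤ p) (φ : V → ℝ) :
    |W.mean φ| ^ p * W.swt Set.univ ≤ W.powSum p φ := by
  set w : V → ℝ := fun x => W.vwt x / W.swt Set.univ
  have hw : ∀ x ∈ univ, 0 ≤ w x := fun x _ => div_nonneg (W.vwt_nonneg x) hμ.le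
  have hw_sum : ∑ x, w x = 1 := by rw [← sum_div, ← swt_univ, div_self hμ.ne']
  have hmean : |W.mean φ| ≤ ∑ x, w x * |φ x| :=
    calc |W.mean φ| = |∑ x, w x * φ x| := by
          rw [mean, sum_div]
          exact congrArg _ (sum_congr rfl fun x _ => by ring)
      _ ≤ ∑ x, |w x * φ x| := abs_sum_le_sum_abs _ _
      _ = ∑ x, w x * |φ x| := by simp_rw [abs_mul, abs_of_nonneg (hw _ (mem_univ _))]
  calc |W.mean φ| ^ p * W.swt Set.univ ≤ (∑ x, w x * |φ x| ^ p) * W.swt Set.univ := by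
        gcongr
        exact (Real.rpow_le_rpow (abs_nonneg _) hmean (by linarith)).trans
          (Real.rpow_arith_mean_le_arith_mean_rpow univ w _ hw hw_sum (fun x _ => abs_nonneg _) hp)
    _ = W.powSum p φ := by
        rw [powSum, sum_mul]
        exact sum_congr rfl fun x _ => by simp only [w]; field_simp

theorem powSum_sub_mean_le (hμ : 0 < W.swt Set.univ) (hp : 1 ≤ p) (φ : V → ℝ) :
    W.powSum p (fun x => φ x - W.mean φ) ≤ 2 ^ p * W.powSum p φ :=
  calc W.powSum p (fun x => φ x - W.mean φ)
      ≤ ∑ x, 2 ^ (p - 1) * (|φ x| ^ p + |W.mean φ| ^ p) * W.vwt x :=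
        sum_le_sum fun x _ =>
          mul_le_mul_of_nonneg_right (abs_sub_rpow_le_two_rpow_mul hp _ _) (W.vwt_nonneg x)
    _ = 2 ^ (p - 1) * (W.powSum p φ + |W.mean φ| ^ p * W.swt Set.univ) := by
        rw [powSum, swt_univ, mul_sum, ← sum_add_distrib, mul_sum]
        exact sum_congr rfl fun x _ => by ring
    _ ≤ 2 ^ (p - 1) * (W.powSum p φ + W.powSum p φ) := by
        gcongr
        exact W.abs_mean_rpow_mul_swt_le hμ hp φ
    _ = 2 ^ p * W.powSum p φ := by
        rw [← two_rpow_sub_one_mul_two p]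
        ring

def rayleighHat (p : ℝ) (φ : V → ℝ) : ℝ := W.energy p φ / (2 * W.powSum p φ)

def rayleigh (p : ℝ) (φ : V → ℝ) : ℝ :=
  W.energy p φ / (2 * W.powSum p (fun x => φ x - W.mean φ))

theorem rayleighHat_nonneg (p : ℝ) (φ : V → ℝ) : 0 ≤ W.rayleighHat p φ :=
  div_nonneg (W.energy_nonneg p φ) (mul_nonneg zero_le_two (W.powSum_nonneg p φ))

theorem rayleigh_nonneg (p : ℝ) (φ : V → ℝ) : 0 ≤ W.rayleigh p φ :=
  div_nonneg (W.energy_nonneg p φ) (mul_nonneg zero_le_two (W.powSum_nonneg p _))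

theorem rayleigh_zero (hp : p ≠ 0) : W.rayleigh p 0 = 0 := by
  rw [rayleigh, energy_zero W hp, zero_div]

theorem rayleighHat_le (hp : 1 ≤ p) (φ : V → ℝ) : W.rayleighHat p φ ≤ 2 ^ (p - 1) :=
  div_two_mul_le_two_rpow_sub_one (W.powSum_nonneg p φ) (W.energy_le_two_rpow_mul_powSum hp φ)

theorem energy_le_two_rpow_mul_powSum_sub_mean (hp : 1 ≤ p) (φ : V → ℝ) :
    W.energy p φ ≤ 2 ^ p * W.powSum p (fun x => φ x - W.mean φ) := by
  rw [← W.energy_add_const p φ (-W.mean φ)]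
  simpa only [← sub_eq_add_neg] using
    W.energy_le_two_rpow_mul_powSum hp (fun x => φ x + -W.mean φ)

theorem rayleigh_le (hp : 1 ≤ p) (φ : V → ℝ) : W.rayleigh p φ ≤ 2 ^ (p - 1) :=
  div_two_mul_le_two_rpow_sub_one (W.powSum_nonneg p _)
    (W.energy_le_two_rpow_mul_powSum_sub_mean hp φ)

theorem rayleigh_eq_rayleighHat_of_mean_eq_zero {φ : V → ℝ} (h : W.mean φ = 0) :
    W.rayleigh p φ = W.rayleighHat p φ := by
  simp only [rayleigh, rayleighHat, h, sub_zero]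

theorem rayleigh_add_const (hμ : W.swt Set.univ ≠ 0) (φ : V → ℝ) (c : ℝ) :
    W.rayleigh p (fun x => φ x + c) = W.rayleigh p φ := by
  simp only [rayleigh, energy_add_const, W.mean_add_const hμ, add_sub_add_right_eq_sub]

theorem rayleighHat_le_two_rpow_mul_rayleigh (hμ : 0 < W.swt Set.univ) (hp : 1 ≤ p)
    (φ : V → ℝ) : W.rayleighHat p φ ≤ 2 ^ p * W.rayleigh p φ := by
  have hE := W.energy_le_two_rpow_mul_powSum_sub_mean hp φ
  have hD := W.powSum_sub_mean_le hμ hp φ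
  rcases (W.powSum_nonneg p (fun x => φ x - W.mean φ)).eq_or_lt with h0 | hpos
  · have : W.energy p φ = 0 := le_antisymm (by simpa [← h0] using hE) (W.energy_nonneg p φ)
    rw [rayleighHat, this, zero_div]
    exact mul_nonneg (by positivity) (W.rayleigh_nonneg p φ)
  · have hpos' : 0 < W.powSum p φ := pos_of_mul_pos_right (hpos.trans_le hD) (by positivity)
    rw [rayleighHat, rayleigh, mul_div_assoc', div_le_div_iff₀ (by positivity) (by positivity)]
    nlinarith [W.energy_nonneg p φ]

theorem nu_eq (k : ℕ) (p : ℝ) : W.nu k p = sInf {s | ∃ L : Submodule ℝ (V → ℝ),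
    finrank ℝ L = k ∧ (∀ φ ∈ L, (∃ c : ℝ, ∀ x, φ x = c) → φ = 0) ∧
    s = L.supNonzero (W.rayleigh p)} := rfl

theorem nuHat_eq (k : ℕ) (p : ℝ) : W.nuHat k p = sInf {s | ∃ L : Submodule ℝ (V → ℝ),
    finrank ℝ L = k + 1 ∧ s = L.supNonzero (W.rayleighHat p)} := rfl

theorem eq_zero_of_const_of_le_ker_mean (hμ : W.swt Set.univ ≠ 0) {K : Submodule ℝ (V → ℝ)}
    (hK : K ≤ LinearMap.ker W.meanLinearMap) :
    ∀ φ ∈ K, (∃ c : ℝ, ∀ x, φ x = c) → φ = 0 := by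
  rintro φ hφ ⟨c, hc⟩
  obtain rfl : φ = fun _ => c := funext hc
  have : W.mean (fun _ => c) = 0 := hK hφ
  rw [W.mean_const hμ] at this
  exact funext fun _ => this

theorem nu_le_supNonzero_rayleighHat (hμ : 0 < W.swt Set.univ) (hp : 1 ≤ p) {k : ℕ}
    (hk : 1 ≤ k) {L : Submodule ℝ (V → ℝ)} (hL : finrank ℝ L = k + 1) :
    W.nu k p ≤ L.supNonzero (W.rayleighHat p) := by
  obtain ⟨K, hKL, hKmean, hKk⟩ := L.exists_le_ker_finrank_eq W.meanLinearMap hL.ge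
  have hK : K ≠ ⊥ := Submodule.one_le_finrank_iff.1 (hKk ▸ hk)
  calc W.nu k p ≤ K.supNonzero (W.rayleigh p) := by
        rw [nu_eq]
        refine csInf_le ⟨0, ?_⟩ ⟨K, hKk, W.eq_zero_of_const_of_le_ker_mean hμ.ne' hKmean, rfl⟩
        rintro _ ⟨L, -, -, rfl⟩
        exact Submodule.supNonzero_nonneg (W.rayleigh_nonneg p)
    _ ≤ L.supNonzero (W.rayleighHat p) := Submodule.supNonzero_le hK fun φ hφ h0 => by
        rw [W.rayleigh_eq_rayleighHat_of_mean_eq_zero (hKmean hφ)]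
        exact Submodule.le_supNonzero (W.rayleighHat_le hp) (hKL hφ) h0

theorem nuHat_le_two_rpow_mul_supNonzero_rayleigh [Nonempty V] (hμ : 0 < W.swt Set.univ)
    (hp : 1 ≤ p) {k : ℕ} {K : Submodule ℝ (V → ℝ)} (hK : finrank ℝ K = k)
    (hconst : ∀ φ ∈ K, (∃ c : ℝ, ∀ x, φ x = c) → φ = 0) :
    W.nuHat k p ≤ 2 ^ p * K.supNonzero (W.rayleigh p) := by
  have h1 : (1 : V → ℝ) ∉ K := fun h => one_ne_zero (hconst 1 h ⟨1, fun _ => rfl⟩)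
  set L := K ⊔ Submodule.span ℝ {(1 : V → ℝ)}
  have hL : finrank ℝ L = k + 1 := hK ▸ Submodule.finrank_sup_span_singleton h1
  have hLne : L ≠ ⊥ := Submodule.one_le_finrank_iff.1 (by omega)
  calc W.nuHat k p ≤ L.supNonzero (W.rayleighHat p) := by
        rw [nuHat_eq]
        refine csInf_le ⟨0, ?_⟩ ⟨L, hL, rfl⟩
        rintro _ ⟨L, -, rfl⟩
        exact Submodule.supNonzero_nonneg (W.rayleighHat_nonneg p)
    _ ≤ 2 ^ p * K.supNonzero (W.rayleigh p) := Submodule.supNonzero_le hLne fun φ hφ _ => by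
        obtain ⟨ψ, hψ, _, hc, rfl⟩ := Submodule.mem_sup.1 hφ
        obtain ⟨c, rfl⟩ := Submodule.mem_span_singleton.1 hc
        have hφψ : W.rayleigh p (ψ + c • 1) = W.rayleigh p ψ :=
          (congrArg _ (funext fun x => by simp)).trans (W.rayleigh_add_const hμ.ne' ψ c)
        calc W.rayleighHat p (ψ + c • 1) ≤ 2 ^ p * W.rayleigh p (ψ + c • 1) :=
              W.rayleighHat_le_two_rpow_mul_rayleigh hμ hp _
          _ ≤ 2 ^ p * K.supNonzero (W.rayleigh p) := by
              rw [hφψ]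
              gcongr
              rcases eq_or_ne ψ 0 with rfl | hψ0
              · rw [W.rayleigh_zero (by linarith)]
                exact Submodule.supNonzero_nonneg (W.rayleigh_nonneg p)
              · exact Submodule.le_supNonzero (W.rayleigh_le hp) hψ hψ0

theorem nu_le_nuHat (hμ : 0 < W.swt Set.univ) (hp : 1 ≤ p) {k : ℕ} (hk : 1 ≤ k)
    (hkV : k + 1 ≤ Fintype.card V) : W.nu k p ≤ W.nuHat k p := by
  obtain ⟨L, -, hL⟩ := (⊤ : Submodule ℝ (V → ℝ)).exists_le_finrank_eq
    (k := k + 1) (by rwa [finrank_top, finrank_fintype_fun_eq_card])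
  rw [nuHat_eq]
  refine le_csInf ⟨_, L, hL, rfl⟩ ?_
  rintro _ ⟨L, hL, rfl⟩
  exact W.nu_le_supNonzero_rayleighHat hμ hp hk hL

theorem nuHat_le_two_rpow_mul_nu [Nonempty V] (hμ : 0 < W.swt Set.univ) (hp : 1 ≤ p) {k : ℕ}
    (hkV : k + 1 ≤ Fintype.card V) : W.nuHat k p ≤ 2 ^ p * W.nu k p := by
  obtain ⟨K, -, hKmean, hK⟩ := (⊤ : Submodule ℝ (V → ℝ)).exists_le_ker_finrank_eq
    W.meanLinearMap (by rwa [finrank_top, finrank_fintype_fun_eq_card])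
  have h2p : (0 : ℝ) < 2 ^ p := by positivity
  rw [← div_le_iff₀' h2p, nu_eq]
  refine le_csInf ⟨_, K, hK, W.eq_zero_of_const_of_le_ker_mean hμ.ne' hKmean, rfl⟩ ?_
  rintro _ ⟨K, hK, hconst, rfl⟩
  rw [div_le_iff₀' h2p]
  exact W.nuHat_le_two_rpow_mul_supNonzero_rayleigh hμ hp hK hconst

end WeightedGraph

open WeightedGraph in
/-- For a weighted graph, `1 ≤ k ≤ #V - 1` and `p ∈ [1,∞)`:
`ν_{k,p}(G,μ) ≤ ν̂_{k,p}(G,μ) ≤ 2^p ν_{k,p}(G,μ)`. -/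
theorem nu_le_nuHat_le_two_rpow_mul_nu
    {V : Type*} [Fintype V] (W : WeightedGraph V) (p : ℝ) (hp : 1 ≤ p)
    (k : ℕ) (hk₁ : 1 ≤ k) (hk₂ : k ≤ Fintype.card V - 1) :
    W.nu k p ≤ W.nuHat k p ∧ W.nuHat k p ≤ (2 : ℝ) ^ p * W.nu k p := by
  have : Nontrivial V := Fintype.one_lt_card_iff_nontrivial.1 (by omega)
  exact ⟨W.nu_le_nuHat W.swt_univ_pos hp hk₁ (by omega),
    W.nuHat_le_two_rpow_mul_nu W.swt_univ_pos hp (by omega)⟩
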